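/- arXiv:2203.05454 — 2 statements merged into one kernel-verified Lean document; each statement's English description precedes it below -/
import Mathlib

section
/- Let G = (B,ψ,A) be a quantum graph with δ-form ψ and completely positive quantum adjacency matrix A, and E_G = B·ε_G·B its quantum edge correspondence inside B⊗_ψ B. Suppose A is a homomorphism. Then for all x,y ∈ B, (xy)·ε_G = x·ε_G·A(y). -/
open scoped TensorProduct
open TensorProduct

noncomputable section


open scoped TensorProduct
open TensorProduct

noncomputable section

variable {B : Type*} [Ring B] [StarRing B] [Algebra ℂ B] [StarModule ℂ B]
  [Module.Finite ℂ B] [Module.Free ℂ B]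

/-- The multiplication map `m : B ⊗ B → B`. -/
abbrev mulMap (B : Type*) [Ring B] [Algebra ℂ B] : B ⊗[ℂ] B →ₗ[ℂ] B := LinearMap.mul' ℂ B

/-- `ψ ⊗ ψ` as a functional on `B ⊗ B`. -/
def psi2 (ψ : B →ₗ[ℂ] ℂ) : B ⊗[ℂ] B →ₗ[ℂ] ℂ :=
  (TensorProduct.lid ℂ ℂ).toLinearMap ∘ₗ TensorProduct.map ψ ψ

/-- `ψ ⊗ id : B ⊗ B → B`. -/
def psiOne (ψ : B →ₗ[ℂ] ℂ) : B ⊗[ℂ] B →ₗ[ℂ] B :=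
  (TensorProduct.lid ℂ B).toLinearMap ∘ₗ TensorProduct.map ψ LinearMap.id

/-- `ψ` is a faithful state. -/
def IsState (ψ : B →ₗ[ℂ] ℂ) : Prop :=
  ψ 1 = 1 ∧ (∀ x : B, 0 ≤ (ψ (star x * x)).re ∧ (ψ (star x * x)).im = 0) ∧
    ∀ x : B, ψ (star x * x) = 0 → x = 0

/-- `mstar` is the adjoint of multiplication w.r.t. the GNS inner products of `ψ`:
`⟪y ⊗ z, m*(x)⟫_{ψ⊗ψ} = ⟪y * z, x⟫_ψ`. -/
def IsAdjointMul (ψ : B →ₗ[ℂ] ℂ) (mstar : B →ₗ[ℂ] B ⊗[ℂ] B) : Prop :=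
  ∀ x y z : B, psi2 ψ ((star y ⊗ₜ[ℂ] star z) * mstar x) = ψ (star (y * z) * x)

/-- `ψ` is a `δ`-form: `m m* = δ² id`. -/
def IsDeltaForm (mstar : B →ₗ[ℂ] B ⊗[ℂ] B) (δ : ℝ) : Prop :=
  ∀ x : B, mulMap B (mstar x) = ((δ : ℂ)^2) • x

/-- `A` is a quantum adjacency matrix: `m (A ⊗ A) m* = δ² A`. -/
def IsQAdj (mstar : B →ₗ[ℂ] B ⊗[ℂ] B) (δ : ℝ) (A : B →ₗ[ℂ] B) : Prop :=
  ∀ x : B, mulMap B (TensorProduct.map A A (mstar x)) = ((δ : ℂ)^2) • A x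

/-- The quantum edge indicator `ε = (1/δ²)(1 ⊗ A) m*(1)`. -/
def edgeInd (mstar : B →ₗ[ℂ] B ⊗[ℂ] B) (δ : ℝ) (A : B →ₗ[ℂ] B) : B ⊗[ℂ] B :=
  (((δ : ℂ)^2)⁻¹) • (LinearMap.lTensor B A) (mstar 1)

/-- The `#`-multiplication on `B ⊗ B`: `(a⊗b)#(c⊗d) = (ac)⊗(db)` (i.e. `B ⊗ Bᵒᵖ`). -/
def hashMul (ξ η : B ⊗[ℂ] B) : B ⊗[ℂ] B :=
  (TensorProduct.congr (LinearEquiv.refl ℂ B) (MulOpposite.opLinearEquiv ℂ (M := B))).symm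
    ((TensorProduct.congr (LinearEquiv.refl ℂ B) (MulOpposite.opLinearEquiv ℂ (M := B))) ξ *
      (TensorProduct.congr (LinearEquiv.refl ℂ B) (MulOpposite.opLinearEquiv ℂ (M := B))) η)

/-- The (conjugate-linear) star operation on `B ⊗ B`, `star (a ⊗ b) = star a ⊗ star b`,
defined via a choice of basis. -/
def starT (ξ : B ⊗[ℂ] B) : B ⊗[ℂ] B :=
  ∑ p : Module.Free.ChooseBasisIndex ℂ B × Module.Free.ChooseBasisIndex ℂ B,
    (starRingEnd ℂ)
      (((Module.Free.chooseBasis ℂ B).tensorProduct (Module.Free.chooseBasis ℂ B)).repr ξ p) •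
      (star ((Module.Free.chooseBasis ℂ B) p.1) ⊗ₜ[ℂ] star ((Module.Free.chooseBasis ℂ B) p.2))

/-- The `B`-valued inner product on `B ⊗ B`: `⟨a⊗b, c⊗d⟩_B = ψ(a*c) b* d`. -/
def bip (ψ : B →ₗ[ℂ] ℂ) (ξ η : B ⊗[ℂ] B) : B := psiOne ψ (starT ξ * η)

/-- Positivity in a star ring. -/
def IsPosEl {R : Type*} [Ring R] [StarRing R] (x : R) : Prop := ∃ y, x = star y * y

/-- Complete positivity of a linear map on `B`. -/
def IsCP (A : B →ₗ[ℂ] B) : Prop :=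
  ∀ (n : ℕ) (M : Matrix (Fin n) (Fin n) B), IsPosEl M → IsPosEl (M.map A)

/-- The map `A_ξ : x ↦ δ² (ψ ⊗ 1)(x · ξ)`. -/
def Axi (ψ : B →ₗ[ℂ] ℂ) (δ : ℝ) (ξ : B ⊗[ℂ] B) : B →ₗ[ℂ] B :=
  ((δ : ℂ)^2) • ((psiOne ψ) ∘ₗ ((LinearMap.mul ℂ (B ⊗[ℂ] B)).flip ξ) ∘ₗ
    (Algebra.TensorProduct.includeLeft : B →ₐ[ℂ] B ⊗[ℂ] B).toLinearMap)

/-- The quantum edge correspondence `E_G = B · ε_G · B` as a subspace of `B ⊗ B`. -/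
def EGspan (mstar : B →ₗ[ℂ] B ⊗[ℂ] B) (δ : ℝ) (A : B →ₗ[ℂ] B) : Submodule ℂ (B ⊗[ℂ] B) :=
  Submodule.span ℂ
    {z : B ⊗[ℂ] B | ∃ x y : B, z = (x ⊗ₜ[ℂ] (1 : B)) * edgeInd mstar δ A * ((1 : B) ⊗ₜ[ℂ] y)}

/-!
Faithfulness of `ψ` gives an orthonormal basis `fᵢ` for `⟪x, y⟫ = ψ (x⋆ y)`, in which
`m*(x) = ∑ fᵢ ⊗ fᵢ⋆ x`; together with the nondegeneracy of `ψ ⊗ ψ` on `B ⊗ B` this makes `m*` a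
`B`-bimodule map, so `(y ⊗ 1) m*(1) = m*(y) = m*(1) (1 ⊗ y)`. Applying `1 ⊗ A` keeps the left
factor `y ⊗ 1` and, `A` being multiplicative, turns `1 ⊗ y` on the right into `1 ⊗ A y`: hence
`(y ⊗ 1) ε = ε (1 ⊗ A y)`, and multiplying by `x ⊗ 1` on the left gives the claim.
-/

open ComplexConjugate

theorem psi2_tmul {B : Type*} [Ring B] [Algebra ℂ B] (ψ : B →ₗ[ℂ] ℂ) (a b : B) :
    psi2 ψ (a ⊗ₜ[ℂ] b) = ψ a * ψ b := by
  simp [psi2]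

def IsOrthonormalFor {B : Type*} [Ring B] [StarRing B] [Algebra ℂ B] (ψ : B →ₗ[ℂ] ℂ)
    {ι : Type*} [DecidableEq ι] (f : ι → B) : Prop :=
  ∀ i j, ψ (star (f i) * f j) = if i = j then 1 else 0

section StarFunctional

variable {B : Type*} [Ring B] [StarRing B] [Algebra ℂ B] [StarModule ℂ B]

/-- Polarization with `x = a + 1` and `x = a + i`. -/
theorem LinearMap.map_star_of_forall_im_eq_zero (ψ : B →ₗ[ℂ] ℂ)
    (h : ∀ x : B, (ψ (star x * x)).im = 0) (a : B) : ψ (star a) = conj (ψ a) := by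
  have h_one : (ψ 1).im = 0 := by simpa using h 1
  have h_im : (ψ (star a)).im + (ψ a).im = 0 := by
    have e : star (a + 1) * (a + 1) = star a * a + star a + a + 1 := by
      rw [star_add, star_one]; noncomm_ring
    have := h (a + 1)
    rw [e] at this
    simp only [map_add, Complex.add_im, h a, h_one] at this
    linarith
  have h_re : (ψ (star a)).re - (ψ a).re = 0 := by
    have e : star (a + Complex.I • 1) * (a + Complex.I • 1)
        = star a * a + Complex.I • star a - Complex.I • a + 1 := by
      rw [star_add, star_smul, star_one, Complex.star_def, Complex.conj_I]
      simp only [add_mul, mul_add, smul_mul_assoc, mul_smul_comm, one_mul, mul_one]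
      match_scalars <;> simp
    have := h (a + Complex.I • 1)
    rw [e] at this
    simp only [map_add, map_sub, map_smul, smul_eq_mul, Complex.add_im, Complex.sub_im,
      Complex.mul_im, Complex.I_re, Complex.I_im, h a, h_one] at this
    linarith
  apply Complex.ext <;> simp only [Complex.conj_re, Complex.conj_im] <;> linarith

theorem IsState.map_star {ψ : B →ₗ[ℂ] ℂ} (hψ : IsState ψ) (a : B) :
    ψ (star a) = conj (ψ a) :=
  ψ.map_star_of_forall_im_eq_zero (fun x => (hψ.2.1 x).2) a

theorem IsState.exists_basis_isOrthonormalFor [Module.Finite ℂ B] {ψ : B →ₗ[ℂ] ℂ}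
    (hψ : IsState ψ) : ∃ (n : ℕ) (f : Module.Basis (Fin n) ℂ B), IsOrthonormalFor ψ f := by
  let core : InnerProductSpace.Core ℂ B :=
    { inner x y := ψ (star x * y)
      conj_inner_symm x y := by
        simp only [← hψ.map_star, star_mul, star_star]
      re_inner_nonneg x := (hψ.2.1 x).1
      definite x := hψ.2.2 x
      add_left x y z := by simp only [star_add, add_mul, map_add]
      smul_left x y r := by simp only [star_smul, smul_mul_assoc, map_smul, smul_eq_mul]; rfl }
  let _ : NormedAddCommGroup B := core.toNormedAddCommGroup
  let _ : InnerProductSpace ℂ B := InnerProductSpace.ofCore core.toCore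
  let e := stdOrthonormalBasis ℂ B
  exact ⟨_, e.toBasis, fun i j => by
    rw [OrthonormalBasis.coe_toBasis]; exact orthonormal_iff_ite.mp e.orthonormal i j⟩

end StarFunctional

section TensorAlgebra

variable {R S T U : Type*} [CommSemiring R] [Semiring S] [Algebra R S] [Semiring T]
  [Algebra R T] [Semiring U] [Algebra R U]

theorem LinearMap.tmul_one_mul_lTensor (g : T →ₗ[R] U) (s : S) (ξ : S ⊗[R] T) :
    (s ⊗ₜ[R] (1 : U)) * g.lTensor S ξ = g.lTensor S ((s ⊗ₜ[R] (1 : T)) * ξ) := by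
  induction ξ using TensorProduct.induction_on with
  | zero => simp only [map_zero, mul_zero]
  | tmul a b => simp only [lTensor_tmul, Algebra.TensorProduct.tmul_mul_tmul, one_mul]
  | add u v hu hv => simp only [map_add, mul_add, hu, hv]

theorem LinearMap.lTensor_mul_one_tmul (g : T →ₗ[R] U) (hg : ∀ x y, g (x * y) = g x * g y)
    (ξ : S ⊗[R] T) (t : T) :
    g.lTensor S (ξ * ((1 : S) ⊗ₜ[R] t)) = g.lTensor S ξ * ((1 : S) ⊗ₜ[R] g t) := by
  induction ξ using TensorProduct.induction_on with
  | zero => simp only [map_zero, zero_mul]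
  | tmul a b => simp only [lTensor_tmul, Algebra.TensorProduct.tmul_mul_tmul, mul_one, hg]
  | add u v hu hv => simp only [map_add, add_mul, hu, hv]

end TensorAlgebra

section AdjointMul

variable {B : Type*} [Ring B] [StarRing B] [Algebra ℂ B]

theorem IsAdjointMul.psi2_tmul_mul {ψ : B →ₗ[ℂ] ℂ} {mstar : B →ₗ[ℂ] B ⊗[ℂ] B}
    (hadj : IsAdjointMul ψ mstar) (a b x : B) :
    psi2 ψ ((a ⊗ₜ[ℂ] b) * mstar x) = ψ (b * a * x) := by
  simpa only [star_star, star_mul] using hadj x (star a) (star b)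

variable {ψ : B →ₗ[ℂ] ℂ} {ι : Type*} [Fintype ι] [DecidableEq ι] {f : Module.Basis ι ℂ B}

theorem IsOrthonormalFor.repr_apply (hf : IsOrthonormalFor ψ f) (v : B) (j : ι) :
    f.repr v j = ψ (star (f j) * v) := by
  conv_rhs => rw [← f.sum_repr v]
  simp only [Finset.mul_sum, mul_smul_comm, map_sum, map_smul, smul_eq_mul, hf j, mul_ite,
    mul_one, mul_zero, Finset.sum_ite_eq, Finset.mem_univ, if_true]

theorem IsOrthonormalFor.eq_zero_of_forall_psi2_tmul_mul_eq_zero (hψ : IsState ψ)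
    (hf : IsOrthonormalFor ψ f) {ξ : B ⊗[ℂ] B}
    (h : ∀ a b : B, psi2 ψ ((a ⊗ₜ[ℂ] b) * ξ) = 0) : ξ = 0 := by
  set e := TensorProduct.equivFinsuppOfBasisLeft (N := B) f
  have hξ : ξ = ∑ i, f i ⊗ₜ[ℂ] e ξ i := by
    conv_lhs => rw [← e.symm_apply_apply ξ]
    rw [TensorProduct.equivFinsuppOfBasisLeft_symm_apply, Finsupp.sum_fintype _ _ (by simp)]
  have hpair : ∀ j b, psi2 ψ ((star (f j) ⊗ₜ[ℂ] b) * ξ) = ψ (b * e ξ j) := by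
    intro j b
    conv_lhs => rw [hξ]
    rw [Finset.mul_sum, map_sum]
    simp [Algebra.TensorProduct.tmul_mul_tmul, psi2_tmul, hf j]
  have he : e ξ = 0 := Finsupp.ext fun j => hψ.2.2 _ (by rw [← hpair]; exact h _ _)
  exact e.map_eq_zero_iff.mp he

theorem IsOrthonormalFor.sum_psi_mul_smul_star [StarModule ℂ B] (hψ : IsState ψ)
    (hf : IsOrthonormalFor ψ f) (a : B) : ∑ i, ψ (a * f i) • star (f i) = a := by
  apply star_injective
  simp only [star_sum, star_smul, star_star, ← hψ.map_star, star_mul, Complex.star_def]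
  simp only [← hf.repr_apply, f.sum_repr]

theorem IsAdjointMul.eq_sum_tmul [StarModule ℂ B] {mstar : B →ₗ[ℂ] B ⊗[ℂ] B} (hψ : IsState ψ)
    (hadj : IsAdjointMul ψ mstar) (hf : IsOrthonormalFor ψ f) (x : B) :
    mstar x = ∑ i, f i ⊗ₜ[ℂ] (star (f i) * x) := by
  rw [← sub_eq_zero]
  refine hf.eq_zero_of_forall_psi2_tmul_mul_eq_zero hψ fun a b => ?_
  have hsum : ∑ i, ψ (a * f i) * ψ (b * (star (f i) * x))
      = ψ (b * (∑ i, ψ (a * f i) • star (f i)) * x) := by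
    simp only [Finset.mul_sum, Finset.sum_mul, map_sum, mul_smul_comm, smul_mul_assoc, map_smul,
      smul_eq_mul, mul_assoc]
  rw [mul_sub, map_sub, hadj.psi2_tmul_mul, Finset.mul_sum, map_sum]
  simp only [Algebra.TensorProduct.tmul_mul_tmul, psi2_tmul]
  rw [hsum, hf.sum_psi_mul_smul_star hψ, sub_self]

end AdjointMul

section Bimodule

variable {B : Type*} [Ring B] [StarRing B] [Algebra ℂ B] [StarModule ℂ B] [Module.Finite ℂ B]
  {ψ : B →ₗ[ℂ] ℂ} {mstar : B →ₗ[ℂ] B ⊗[ℂ] B}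

theorem IsAdjointMul.tmul_one_mul (hψ : IsState ψ) (hadj : IsAdjointMul ψ mstar) (x y : B) :
    (y ⊗ₜ[ℂ] (1 : B)) * mstar x = mstar (y * x) := by
  obtain ⟨n, f, hf⟩ := hψ.exists_basis_isOrthonormalFor
  rw [← sub_eq_zero]
  refine hf.eq_zero_of_forall_psi2_tmul_mul_eq_zero hψ fun a b => ?_
  rw [mul_sub, map_sub, ← mul_assoc, Algebra.TensorProduct.tmul_mul_tmul, mul_one,
    hadj.psi2_tmul_mul, hadj.psi2_tmul_mul]
  simp only [mul_assoc, sub_self]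

theorem IsAdjointMul.mul_one_tmul (hψ : IsState ψ) (hadj : IsAdjointMul ψ mstar) (x y : B) :
    mstar x * ((1 : B) ⊗ₜ[ℂ] y) = mstar (x * y) := by
  obtain ⟨n, f, hf⟩ := hψ.exists_basis_isOrthonormalFor
  simp only [hadj.eq_sum_tmul hψ hf, Finset.sum_mul, Algebra.TensorProduct.tmul_mul_tmul,
    mul_one, mul_assoc]

end Bimodule

theorem tmul_one_mul_edgeInd {B : Type*} [Ring B] [StarRing B] [Algebra ℂ B] [StarModule ℂ B]
    [Module.Finite ℂ B] {ψ : B →ₗ[ℂ] ℂ} (hψ : IsState ψ) {mstar : B →ₗ[ℂ] B ⊗[ℂ] B}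
    (hadj : IsAdjointMul ψ mstar) (δ : ℝ) {A : B →ₗ[ℂ] B} (hhom : ∀ x y, A (x * y) = A x * A y)
    (y : B) : (y ⊗ₜ[ℂ] (1 : B)) * edgeInd mstar δ A = edgeInd mstar δ A * ((1 : B) ⊗ₜ[ℂ] A y) := by
  have h : (y ⊗ₜ[ℂ] (1 : B)) * A.lTensor B (mstar 1)
      = A.lTensor B (mstar 1) * ((1 : B) ⊗ₜ[ℂ] A y) := by
    rw [A.tmul_one_mul_lTensor, hadj.tmul_one_mul hψ, ← A.lTensor_mul_one_tmul hhom,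
      hadj.mul_one_tmul hψ, mul_one, one_mul]
  simp only [edgeInd, mul_smul_comm, smul_mul_assoc, h]

theorem stmt_11_general {B : Type*} [Ring B] [StarRing B] [Algebra ℂ B] [StarModule ℂ B]
    [Module.Finite ℂ B]
    (ψ : B →ₗ[ℂ] ℂ) (hψ : IsState ψ)
    (mstar : B →ₗ[ℂ] B ⊗[ℂ] B) (hadj : IsAdjointMul ψ mstar)
    (δ : ℝ)
    (A : B →ₗ[ℂ] B)
    (hhom : ∀ x y, A (x * y) = A x * A y) :
    ∀ x y : B,
      ((x * y) ⊗ₜ[ℂ] (1 : B)) * edgeInd mstar δ A =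
        ((x ⊗ₜ[ℂ] (1 : B)) * edgeInd mstar δ A) * ((1 : B) ⊗ₜ[ℂ] A y) := by
  intro x y
  have hxy : (x * y) ⊗ₜ[ℂ] (1 : B) = (x ⊗ₜ[ℂ] (1 : B)) * (y ⊗ₜ[ℂ] (1 : B)) := by
    rw [Algebra.TensorProduct.tmul_mul_tmul, mul_one]
  rw [hxy, mul_assoc, tmul_one_mul_edgeInd hψ hadj δ hhom, mul_assoc]

/-- If the completely positive quantum adjacency matrix `A` is a homomorphism, then
`(xy)·ε_G = x·ε_G·A(y)`. -/
theorem stmt_11 {B : Type*} [Ring B] [StarRing B] [Algebra ℂ B] [StarModule ℂ B]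
    [Module.Finite ℂ B] [Module.Free ℂ B]
    (ψ : B →ₗ[ℂ] ℂ) (hψ : IsState ψ)
    (mstar : B →ₗ[ℂ] B ⊗[ℂ] B) (hadj : IsAdjointMul ψ mstar)
    (δ : ℝ) (hδ : 0 < δ) (hdelta : IsDeltaForm mstar δ)
    (A : B →ₗ[ℂ] B) (hA : IsQAdj mstar δ A) (hcp : IsCP A)
    (hhom : ∀ x y, A (x * y) = A x * A y) :
    ∀ x y : B,
      ((x * y) ⊗ₜ[ℂ] (1 : B)) * edgeInd mstar δ A =
        ((x ⊗ₜ[ℂ] (1 : B)) * edgeInd mstar δ A) * ((1 : B) ⊗ₜ[ℂ] A y) :=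
  stmt_11_general ψ hψ mstar hadj δ A hhom

end
end
end

section
/- Let G = (B,ψ,A) be a quantum graph with δ-form ψ and completely positive A, with quantum edge indicator ε_G. If for all x,y ∈ B one has (xy)·ε_G = x·ε_G·A(y), then A is multiplicative: A(xy) = A(x)A(y) for all x,y ∈ B. -/
open scoped TensorProduct
open TensorProduct

noncomputable section


open scoped TensorProduct
open TensorProduct

noncomputable section

variable {B : Type*} [Ring B] [StarRing B] [Algebra ℂ B] [StarModule ℂ B]
  [Module.Finite ℂ B] [Module.Free ℂ B]

section myaux

variable (ψ : B →ₗ[ℂ] ℂ)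

lemma psiOne_tmul' (c d : B) : psiOne ψ (c ⊗ₜ[ℂ] d) = ψ c • d := by
  simp [psiOne]

lemma psi2_tmul' (c d : B) : psi2 ψ (c ⊗ₜ[ℂ] d) = ψ c * ψ d := by
  simp [psi2]

lemma psiOne_mul_right' (t : B ⊗[ℂ] B) (b : B) :
    psiOne ψ (t * ((1 : B) ⊗ₜ[ℂ] b)) = psiOne ψ t * b := by
  induction t using TensorProduct.induction_on with
  | zero => simp
  | tmul c d =>
      simp [Algebra.TensorProduct.tmul_mul_tmul, psiOne_tmul', smul_mul_assoc]
  | add s t hs ht => simp [add_mul, hs, ht]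

lemma psi_mul_psiOne' (b : B) (s : B ⊗[ℂ] B) :
    ψ (b * psiOne ψ s) = psi2 ψ (((1 : B) ⊗ₜ[ℂ] b) * s) := by
  induction s using TensorProduct.induction_on with
  | zero => simp
  | tmul c d =>
      simp [Algebra.TensorProduct.tmul_mul_tmul, psiOne_tmul', psi2_tmul',
        mul_smul_comm, smul_eq_mul]
  | add s t hs ht => simp [mul_add, hs, ht]

lemma eq_of_psi_mul (hψ : IsState ψ) (c : B) (h : ∀ b : B, ψ (b * c) = 0) :
    c = 0 :=
  hψ.2.2 c (h (star c))

lemma tmul_mul_lTensor' (A : B →ₗ[ℂ] B) (x : B) (t : B ⊗[ℂ] B) :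
    (x ⊗ₜ[ℂ] (1 : B)) * LinearMap.lTensor B A t =
      LinearMap.lTensor B A ((x ⊗ₜ[ℂ] (1 : B)) * t) := by
  induction t using TensorProduct.induction_on with
  | zero => simp
  | tmul c d => simp [Algebra.TensorProduct.tmul_mul_tmul]
  | add s t hs ht => simp [mul_add, hs, ht]

lemma psiOne_lTensor' (A : B →ₗ[ℂ] B) (s : B ⊗[ℂ] B) :
    psiOne ψ (LinearMap.lTensor B A s) = A (psiOne ψ s) := by
  induction s using TensorProduct.induction_on with
  | zero => simp
  | tmul c d => simp [psiOne_tmul']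
  | add s t hs ht => simp [hs, ht]

lemma key_psiOne_mstar (hψ : IsState ψ) (mstar : B →ₗ[ℂ] B ⊗[ℂ] B)
    (hadj : IsAdjointMul ψ mstar) (a : B) :
    psiOne ψ ((a ⊗ₜ[ℂ] (1 : B)) * mstar 1) = a := by
  have hb : ∀ b : B, ψ (b * (psiOne ψ ((a ⊗ₜ[ℂ] (1 : B)) * mstar 1) - a)) = 0 := by
    intro b
    have h1 : ψ (b * psiOne ψ ((a ⊗ₜ[ℂ] (1 : B)) * mstar 1)) =
        psi2 ψ ((a ⊗ₜ[ℂ] b) * mstar 1) := by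
      rw [psi_mul_psiOne', ← mul_assoc]
      congr 2
      simp [Algebra.TensorProduct.tmul_mul_tmul]
    have h2 := hadj 1 (star a) (star b)
    simp only [star_star, mul_one, star_mul] at h2
    rw [mul_sub, map_sub, h1, h2, sub_eq_zero]
  exact sub_eq_zero.mp (eq_of_psi_mul ψ hψ _ hb)

lemma psiOne_tmul_edgeInd (hψ : IsState ψ) (mstar : B →ₗ[ℂ] B ⊗[ℂ] B)
    (hadj : IsAdjointMul ψ mstar) (δ : ℝ) (A : B →ₗ[ℂ] B) (x : B) :
    psiOne ψ ((x ⊗ₜ[ℂ] (1 : B)) * edgeInd mstar δ A) = (((δ : ℂ) ^ 2)⁻¹) • A x := by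
  rw [edgeInd, mul_smul_comm, map_smul, tmul_mul_lTensor', psiOne_lTensor',
    key_psiOne_mstar ψ hψ mstar hadj]

end myaux

/-- If `(xy)·ε_G = x·ε_G·A(y)` for all `x, y`, then `A` is multiplicative. -/
theorem stmt_12 {B : Type*} [Ring B] [StarRing B] [Algebra ℂ B] [StarModule ℂ B]
    [Module.Finite ℂ B] [Module.Free ℂ B]
    (ψ : B →ₗ[ℂ] ℂ) (hψ : IsState ψ)
    (mstar : B →ₗ[ℂ] B ⊗[ℂ] B) (hadj : IsAdjointMul ψ mstar)
    (δ : ℝ) (hδ : 0 < δ) (hdelta : IsDeltaForm mstar δ)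
    (A : B →ₗ[ℂ] B) (hA : IsQAdj mstar δ A) (hcp : IsCP A)
    (heq : ∀ x y : B,
      ((x * y) ⊗ₜ[ℂ] (1 : B)) * edgeInd mstar δ A =
        ((x ⊗ₜ[ℂ] (1 : B)) * edgeInd mstar δ A) * ((1 : B) ⊗ₜ[ℂ] A y)) :
    ∀ x y : B, A (x * y) = A x * A y := by
  intro x y
  have H := congrArg (psiOne ψ) (heq x y)
  rw [psiOne_tmul_edgeInd ψ hψ mstar hadj, psiOne_mul_right',
    psiOne_tmul_edgeInd ψ hψ mstar hadj, smul_mul_assoc] at H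
  have hδ0 : (δ : ℂ) ≠ 0 := by exact_mod_cast ne_of_gt hδ
  have hδ2 : (((δ : ℂ) ^ 2)⁻¹) ≠ 0 := inv_ne_zero (pow_ne_zero 2 hδ0)
  exact smul_right_injective B hδ2 H

end
end
end
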